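/- arXiv:2107.07490 — 2 statements merged into one kernel-verified Lean document; each statement's English description precedes it below -/
import Mathlib

section
/- Let A = k[x1,...,xd]/(f) be an affine hypersurface over an algebraically closed field k of characteristic 0, where f has leading term x_d^n with respect to the lexicographic order x1 < ... < xd. Then the reduction system R = {(x_d^n, x_d^n - f)} ∪ {(x_j x_i, x_i x_j) : 1 ≤ i < j ≤ d} satisfies: every path (monomial in the free algebra k⟨x1,...,xd⟩) is reduction finite and reduction unique with respect to R, and the ideal generated by {s - φ_s} equals the kernel of the projection k⟨x1,...,xd⟩ → A. -/
/-!
STATEMENT 0: Let A = k[x₁,...,x_d]/(f) be an affine hypersurface, where f has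
leading term x_dⁿ with respect to the lexicographic order x₁ < ... < x_d.  Then
the reduction system R = {(x_dⁿ, x_dⁿ - f)} ∪ {(x_j x_i, x_i x_j) : i < j} on the
free algebra k⟨x₁,...,x_d⟩ satisfies: every monomial is reduction finite and
reduction unique, and the two-sided ideal generated by {s - φ_s} equals the
kernel of the projection k⟨x₁,...,x_d⟩ → A.
-/

open scoped BigOperators

variable (k : Type*) [Field k] [IsAlgClosed k] [CharZero k] (d n : ℕ)

noncomputable abbrev FA := FreeAlgebra k (Fin d)

/-- The monomial of the free algebra corresponding to a word. -/
noncomputable def mono (w : List (Fin d)) : FA k d :=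
  (w.map (FreeAlgebra.ι k)).prod

/-- The coefficient of a word in an element of the free algebra. -/
noncomputable def coeff (x : FA k d) (w : List (Fin d)) : k :=
  (FreeAlgebra.equivMonoidAlgebraFreeMonoid x).coeff (FreeMonoid.ofList w)

/-- The word x₁^{m₁} x₂^{m₂} ⋯ x_d^{m_d} associated to a commutative monomial. -/
def sortedWord (m : Fin d →₀ ℕ) : List (Fin d) :=
  (List.finRange d).flatMap fun i => List.replicate (m i) i

/-- The standard lift of a commutative polynomial to the free algebra, sending
each monomial to the corresponding sorted (irreducible) word. -/
noncomputable def liftPoly (f : MvPolynomial (Fin d) k) : FA k d :=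
  (AddMonoidAlgebra.coeff f).sum fun m c => c • mono k d (sortedWord d m)

/-- One Bergman reduction step with respect to a reduction system `R`:
some word a·s·b occurring in x with nonzero coefficient (s a left-hand side of
`R`) is replaced by a·φ_s·b. -/
def RStep (R : Set (List (Fin d) × FA k d)) (x y : FA k d) : Prop :=
  ∃ a s b φ, (s, φ) ∈ R ∧ coeff k d x (a ++ s ++ b) ≠ 0 ∧
    y = x + coeff k d x (a ++ s ++ b) •
      (mono k d a * φ * mono k d b - mono k d a * mono k d s * mono k d b)

/-- x is reduction finite: every sequence of reductions starting at x terminates. -/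
def ReductionFinite (R : Set (List (Fin d) × FA k d)) (x : FA k d) : Prop :=
  Acc (fun v u => RStep k d R u v) x

/-- y is in normal form (irreducible) for the rewriting system. -/
def NormalForm (R : Set (List (Fin d) × FA k d)) (y : FA k d) : Prop :=
  ∀ z, ¬ RStep k d R y z

/-- x is reduction unique: all normal forms reachable from x coincide. -/
def ReductionUnique (R : Set (List (Fin d) × FA k d)) (x : FA k d) : Prop :=
  ∀ y z, Relation.ReflTransGen (RStep k d R) x y →
    Relation.ReflTransGen (RStep k d R) x z →
    NormalForm k d R y → NormalForm k d R z → y = z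

variable (f : MvPolynomial (Fin d) k)

/-- The reduction system R = {(x_dⁿ, x_dⁿ - f)} ∪ {(x_j x_i, x_i x_j) : i < j},
where x_dⁿ - f is lifted to the free algebra via sorted words. -/
noncomputable def hypRS (hd : 0 < d) : Set (List (Fin d) × FA k d) :=
  {(List.replicate n ⟨d - 1, by omega⟩,
      mono k d (List.replicate n ⟨d - 1, by omega⟩) - liftPoly k d f)} ∪
  {p | ∃ i j : Fin d, i < j ∧ p = ([j, i], mono k d [i, j])}

/-- The projection k⟨x₁,...,x_d⟩ → A = k[x₁,...,x_d]/(f). -/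
noncomputable def hypProj : FA k d →+*
    (MvPolynomial (Fin d) k ⧸ Ideal.span {f}) :=
  ((Ideal.Quotient.mk (Ideal.span {f})).comp
    (FreeAlgebra.lift k (fun i => MvPolynomial.X i) : FA k d →ₐ[k] _).toRingHom)


namespace HRS
variable {d : ℕ}

/-- Encode a word as a base-(d+1) number with digits in 1..d. -/
def Nval (d : ℕ) : List (Fin d) → ℕ
  | [] => 0
  | a :: t => ((a : ℕ) + 1) * (d + 1) ^ t.length + Nval d t

lemma Nval_lt (w : List (Fin d)) : Nval d w + 1 ≤ (d + 1) ^ w.length := by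
  induction w with
  | nil => simp [Nval]
  | cons a t ih =>
      have ha : (a : ℕ) + 1 ≤ d := a.2
      have h2 : (d + 1) ^ (a :: t).length = (d + 1) * (d + 1) ^ t.length := by
        simp [pow_succ, mul_comm]
      rw [h2, Nval]
      nlinarith [pow_pos (Nat.succ_pos d) t.length]

lemma Nval_append (x y : List (Fin d)) :
    Nval d (x ++ y) = Nval d x * (d + 1) ^ y.length + Nval d y := by
  induction x with
  | nil => simp [Nval]
  | cons a t ih =>
      rw [List.cons_append]
      show ((a : ℕ) + 1) * (d + 1) ^ (t ++ y).length + Nval d (t ++ y) = _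
      rw [ih, List.length_append, pow_add]
      show _ = (((a : ℕ) + 1) * (d + 1) ^ t.length + Nval d t) * (d+1)^y.length + Nval d y
      ring

lemma Nval_pos {w : List (Fin d)} (hw : w ≠ []) : 0 < Nval d w := by
  cases w with
  | nil => simp at hw
  | cons a t =>
      have := pow_pos (Nat.succ_pos d) t.length
      show 0 < ((a : ℕ) + 1) * (d + 1) ^ t.length + Nval d t
      positivity

lemma Nval_ge (w : List (Fin d)) (hw : w ≠ []) :
    (d + 1) ^ (w.length - 1) ≤ Nval d w := by
  cases w with
  | nil => simp at hw
  | cons a t =>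
      have h1 := Nval_lt t
      show (d+1) ^ ((a :: t).length - 1) ≤ ((a:ℕ)+1) * (d+1)^t.length + Nval d t
      simp only [List.length_cons, Nat.add_sub_cancel]
      nlinarith [Nat.zero_le (Nval d t), Nat.zero_le ((a:ℕ))]

lemma digit_unique {P x y r s : ℕ} (hP : 0 < P) (hr : r < P) (hs : s < P)
    (h : x * P + r = y * P + s) : x = y ∧ r = s := by
  have hx : (x * P + r) / P = x := by
    rw [mul_comm, Nat.mul_add_div hP, Nat.div_eq_of_lt hr, Nat.add_zero]
  have hy : (y * P + s) / P = y := by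
    rw [mul_comm, Nat.mul_add_div hP, Nat.div_eq_of_lt hs, Nat.add_zero]
  have hxy : x = y := by rw [← hx, ← hy, h]
  constructor
  · exact hxy
  · subst hxy; omega

lemma Nval_inj : Function.Injective (Nval d) := by
  intro v w h
  induction v generalizing w with
  | nil =>
      cases w with
      | nil => rfl
      | cons b s =>
          exfalso
          have h2 := Nval_pos (d := d) (w := b :: s) (by simp)
          have h3 : Nval d ([] : List (Fin d)) = 0 := rfl
          omega
  | cons a t ih =>
      cases w with
      | nil =>
          exfalso
          have h2 := Nval_pos (d := d) (w := a :: t) (by simp)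
          have h3 : Nval d ([] : List (Fin d)) = 0 := rfl
          omega
      | cons b s =>
          have hlen : t.length = s.length := by
            by_contra hne
            rcases Nat.lt_or_ge t.length s.length with hl | hl
            · have h1 : Nval d (a :: t) + 1 ≤ (d+1) ^ (t.length + 1) := by
                simpa using Nval_lt (a :: t)
              have h2 : (d+1) ^ s.length ≤ Nval d (b :: s) := by
                simpa using Nval_ge (b :: s) (by simp)
              have : (d+1) ^ (t.length + 1) ≤ (d+1) ^ s.length :=
                Nat.pow_le_pow_right (by omega) (by omega)
              omega
            · have hl' : s.length < t.length := by omega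
              have h1 : Nval d (b :: s) + 1 ≤ (d+1) ^ (s.length + 1) := by
                simpa using Nval_lt (b :: s)
              have h2 : (d+1) ^ t.length ≤ Nval d (a :: t) := by
                simpa using Nval_ge (a :: t) (by simp)
              have : (d+1) ^ (s.length + 1) ≤ (d+1) ^ t.length :=
                Nat.pow_le_pow_right (by omega) (by omega)
              omega
          have ht := Nval_lt t
          have hs := Nval_lt s
          have hP : 0 < (d+1) ^ t.length := pow_pos (Nat.succ_pos d) _
          have h' : ((a:ℕ)+1) * (d+1)^t.length + Nval d t
              = ((b:ℕ)+1) * (d+1)^t.length + Nval d s := by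
            have e1 : Nval d (a :: t) = ((a:ℕ)+1) * (d+1)^t.length + Nval d t := rfl
            have e2 : Nval d (b :: s) = ((b:ℕ)+1) * (d+1)^s.length + Nval d s := rfl
            rw [e1, e2, ← hlen] at h
            exact h
          obtain ⟨h1, h2⟩ := digit_unique hP (by omega) (by rw [hlen]; omega) h'
          have : a = b := Fin.ext (by omega)
          rw [this, ih h2]

lemma Nval_replicate (L : Fin d) (hL : (L : ℕ) = d - 1) (hd : 0 < d) (n : ℕ) :
    Nval d (List.replicate n L) = (d + 1) ^ n - 1 := by
  induction n with
  | zero => simp [Nval]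
  | succ m ih =>
      have e : List.replicate (m+1) L = L :: List.replicate m L := rfl
      have e2 : Nval d (L :: List.replicate m L)
          = ((L:ℕ)+1) * (d+1)^(List.replicate m L).length + Nval d (List.replicate m L) := rfl
      rw [e, e2, ih, List.length_replicate]
      have h1 : 1 ≤ (d+1) ^ m := Nat.one_le_pow _ _ (by omega)
      have hLd : (L : ℕ) + 1 = d := by omega
      rw [hLd, pow_succ]
      have hx : (d+1)^m * (d+1) = d * (d+1)^m + (d+1)^m := by ring
      rw [hx]
      omega

/-- Any word different from `replicate (length) L` has value at least 2 below max. -/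
lemma Nval_add_two (L : Fin d) (hL : (L : ℕ) = d - 1) (hd : 0 < d)
    {w : List (Fin d)} (hne : w ≠ List.replicate w.length L) :
    Nval d w + 2 ≤ (d + 1) ^ w.length := by
  induction w with
  | nil => simp at hne
  | cons a t ih =>
      have e : Nval d (a :: t) = ((a:ℕ)+1) * (d+1)^t.length + Nval d t := rfl
      have h1 := Nval_lt t
      have hP : 1 ≤ (d+1) ^ t.length := Nat.one_le_pow _ _ (by omega)
      have hpow : (d+1) ^ (a :: t).length = (d+1) * (d+1)^t.length := by
        simp [pow_succ, mul_comm]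
      rw [e, hpow]
      rcases Nat.lt_or_ge ((a : ℕ) + 1) d with ha | ha
      · have key : ((a:ℕ)+1) * (d+1)^t.length + 2 * (d+1)^t.length
            ≤ (d+1) * (d+1)^t.length := by
          have : ((a:ℕ)+3) * (d+1)^t.length ≤ (d+1) * (d+1)^t.length :=
            Nat.mul_le_mul_right _ (by omega)
          nlinarith
        linarith
      · have haL : a = L := Fin.ext (by omega)
        have htne : t ≠ List.replicate t.length L := by
          intro hc
          apply hne
          rw [List.length_cons]
          conv_lhs => rw [hc, haL]
          rfl
        have h2 := ih htne
        have key2 : (d+1) * (d+1)^t.length = ((a:ℕ)+1) * (d+1)^t.length + (d+1)^t.length := by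
          have hLd : (a:ℕ) + 1 = d := by omega
          rw [hLd]; ring
        rw [key2]
        omega

lemma Nval_lt_max {n : ℕ} (L : Fin d) (hL : (L : ℕ) = d - 1) (hd : 0 < d)
    {w : List (Fin d)} (hlen : w.length ≤ n) (hne : w ≠ List.replicate n L) :
    Nval d w < Nval d (List.replicate n L) := by
  rw [Nval_replicate L hL hd]
  rcases Nat.lt_or_ge w.length n with hl | hl
  · have h1 := Nval_lt w
    have h2 : (d+1) ^ (w.length + 1) ≤ (d+1)^n := Nat.pow_le_pow_right (by omega) (by omega)
    have h3 : (d+1) ^ w.length * 2 ≤ (d+1) ^ (w.length + 1) := by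
      rw [pow_succ]
      exact Nat.mul_le_mul_left _ (by omega)
    have h4 : 1 ≤ (d+1) ^ w.length := Nat.one_le_pow _ _ (by omega)
    omega
  · have hlw : w.length = n := by omega
    subst hlw
    have := Nval_add_two L hL hd (w := w) (by exact hne)
    omega

/-- Key monotonicity: substituting a smaller, no-longer factor decreases the value. -/
lemma Nval_subst {a b u s : List (Fin d)} (hlen : u.length ≤ s.length)
    (hval : Nval d u < Nval d s) :
    Nval d (a ++ u ++ b) < Nval d (a ++ s ++ b) := by
  rw [List.append_assoc, List.append_assoc, Nval_append a, Nval_append a,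
    Nval_append u, Nval_append s]
  have h1 : (d+1) ^ (u ++ b).length ≤ (d+1) ^ (s ++ b).length := by
    apply Nat.pow_le_pow_right (by omega)
    simp [hlen]
  have h2 : Nval d u * (d+1)^b.length < Nval d s * (d+1)^b.length :=
    (Nat.mul_lt_mul_right (pow_pos (Nat.succ_pos d) _)).mpr hval
  have h3 := Nat.mul_le_mul_left (Nval d a) h1
  omega

end HRS
namespace HRS
open FreeAlgebra MonoidAlgebra FreeMonoid

variable {k : Type*} [Field k] {d : ℕ}

noncomputable def E : FA k d ≃ₐ[k] MonoidAlgebra k (FreeMonoid (Fin d)) :=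
  FreeAlgebra.equivMonoidAlgebraFreeMonoid

lemma E_ι (i : Fin d) : E (FreeAlgebra.ι k i) = single (FreeMonoid.of i) (1 : k) := by
  simp [E, FreeAlgebra.equivMonoidAlgebraFreeMonoid, FreeAlgebra.lift_ι_apply]

lemma E_mono (w : List (Fin d)) :
    E (mono k d w) = single (FreeMonoid.ofList w) (1 : k) := by
  induction w with
  | nil =>
      show E 1 = single (1 : FreeMonoid (Fin d)) (1:k)
      simp [MonoidAlgebra.one_def]
  | cons a t ih =>
      have : mono k d (a :: t) = FreeAlgebra.ι k a * mono k d t := by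
        simp [mono]
      rw [this, map_mul, E_ι, ih, MonoidAlgebra.single_mul_single, one_mul,
        FreeMonoid.ofList_cons]

lemma coeff_def (x : FA k d) (w : List (Fin d)) :
    coeff k d x w = (E x).coeff (FreeMonoid.ofList w) := rfl

lemma coeff_add (x y : FA k d) (w) : coeff k d (x + y) w = coeff k d x w + coeff k d y w := by
  rw [coeff_def, map_add]; rfl

lemma coeff_smul (c : k) (x : FA k d) (w) : coeff k d (c • x) w = c * coeff k d x w := by
  rw [coeff_def, map_smul]; rfl

lemma coeff_sub (x y : FA k d) (w) : coeff k d (x - y) w = coeff k d x w - coeff k d y w := by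
  rw [coeff_def, map_sub]; rfl

lemma coeff_mono (w v : List (Fin d)) :
    coeff k d (mono k d w) v = if v = w then (1:k) else 0 := by
  classical
  rw [coeff_def, E_mono, MonoidAlgebra.coeff_single, Finsupp.single_apply]
  simp [FreeMonoid.ofList, eq_comm]
  exact if_congr Iff.rfl rfl rfl

lemma mono_append (a b : List (Fin d)) : mono k d (a ++ b) = mono k d a * mono k d b := by
  simp [mono]

/-- Decomposition of an element as a sum of monomials. -/
lemma eq_sum_mono (x : FA k d) :
    x = (E x).coeff.sum fun m c => c • mono k d (FreeMonoid.toList m) := by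
  apply E.injective
  rw [map_finsuppSum]
  conv_lhs => rw [← MonoidAlgebra.sum_coeff_single (E x)]
  apply Finsupp.sum_congr
  intro m _
  rw [map_smul, E_mono, FreeMonoid.ofList_toList, MonoidAlgebra.smul_single, smul_eq_mul, mul_one]

lemma coeff_conj (a b v : List (Fin d)) (z : FA k d) :
    coeff k d (mono k d a * z * mono k d b) (a ++ v ++ b) = coeff k d z v := by
  rw [coeff_def, mul_assoc, map_mul, map_mul, E_mono, E_mono]
  have h1 : ∀ u : FreeMonoid (Fin d),
      FreeMonoid.ofList a * u = FreeMonoid.ofList (a ++ v ++ b)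
        ↔ u = FreeMonoid.ofList (v ++ b) := by
    intro u
    change a ++ FreeMonoid.toList u = a ++ v ++ b ↔ FreeMonoid.toList u = v ++ b
    rw [List.append_assoc]
    exact ⟨fun h => List.append_cancel_left h, fun h => by rw [h]⟩
  rw [MonoidAlgebra.coeff_single_mul_eq_mul_coeff _ (fun u _ => h1 u), one_mul]
  have h2 : ∀ u : FreeMonoid (Fin d),
      u * FreeMonoid.ofList b = FreeMonoid.ofList (v ++ b) ↔ u = FreeMonoid.ofList v := by
    intro u
    change FreeMonoid.toList u ++ b = v ++ b ↔ FreeMonoid.toList u = v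
    exact ⟨fun h => List.append_cancel_right h, fun h => by rw [h]⟩
  rw [MonoidAlgebra.coeff_mul_single_eq_coeff_mul _ (fun u _ => h2 u), mul_one]
  rfl

lemma coeff_conj_zero (a b : List (Fin d)) (z : FA k d) (m : List (Fin d))
    (hm : ∀ v, a ++ v ++ b ≠ m) :
    coeff k d (mono k d a * z * mono k d b) m = 0 := by
  classical
  rw [coeff_def, mul_assoc, map_mul, map_mul, E_mono, E_mono]
  by_cases h : ∃ u : FreeMonoid (Fin d), FreeMonoid.ofList m = FreeMonoid.ofList a * u
  · obtain ⟨u, hu⟩ := h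
    have h1 : ∀ w : FreeMonoid (Fin d),
        FreeMonoid.ofList a * w = FreeMonoid.ofList m ↔ w = u := by
      intro w
      have hmu : m = a ++ FreeMonoid.toList u := congrArg FreeMonoid.toList hu
      change a ++ FreeMonoid.toList w = m ↔ w = u
      rw [hmu]
      exact ⟨fun h => FreeMonoid.toList.injective (List.append_cancel_left h),
        fun h => by rw [h]⟩
    rw [MonoidAlgebra.coeff_single_mul_eq_mul_coeff _ (fun u _ => h1 u), one_mul]
    by_cases h2 : ∃ w : FreeMonoid (Fin d), u = w * FreeMonoid.ofList b
    · obtain ⟨w, hw⟩ := h2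
      exfalso
      apply hm (FreeMonoid.toList w)
      have hmu : m = a ++ FreeMonoid.toList u := congrArg FreeMonoid.toList hu
      have huw : FreeMonoid.toList u = FreeMonoid.toList w ++ b := congrArg FreeMonoid.toList hw
      rw [hmu, huw, List.append_assoc]
    · exact MonoidAlgebra.mul_single_apply_of_not_exists_mul _ _ h2
  · rw [MonoidAlgebra.single_mul_apply_of_not_exists_mul _ _ h]

end HRS
namespace HRS
variable {k : Type*} [Field k] {d : ℕ}

/-- The commutative exponent (count) function of a word. -/
noncomputable def cnt (w : List (Fin d)) : Fin d →₀ ℕ :=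
  Finsupp.equivFunOnFinite.symm fun i => w.count i

@[simp] lemma cnt_apply (w : List (Fin d)) (i : Fin d) : cnt w i = w.count i := rfl

lemma count_flatMap_replicate (m : Fin d → ℕ) (i : Fin d) (l : List (Fin d)) :
    ((l.flatMap fun j => List.replicate (m j) j).count i)
      = if i ∈ l then (l.count i) * m i else 0 := by
  induction l with
  | nil => simp
  | cons j t ih =>
      rw [List.flatMap_cons, List.count_append, ih, List.count_replicate]
      by_cases hij : i = j
      · subst hij
        by_cases hit : i ∈ t
        · simp [hit, List.count_cons_self]; ring
        · simp [hit, List.count_cons_self, List.count_eq_zero_of_not_mem hit]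
      · have : (j == i) = false := by simp [Ne.symm hij]
        by_cases hit : i ∈ t
        · simp [hij, hit, List.count_cons_of_ne (Ne.symm hij), this]
        · simp [hij, hit, List.count_cons_of_ne (Ne.symm hij), this]

lemma count_sortedWord (m : Fin d →₀ ℕ) (i : Fin d) :
    (sortedWord d m).count i = m i := by
  rw [sortedWord, count_flatMap_replicate (fun j => m j) i (List.finRange d)]
  have h1 : i ∈ List.finRange d := List.mem_finRange i
  have h2 : (List.finRange d).count i = 1 :=
    List.count_eq_one_of_mem (List.nodup_finRange d) h1
  simp [h1, h2]

lemma cnt_sortedWord (m : Fin d →₀ ℕ) : cnt (sortedWord d m) = m := by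
  ext i; simp [count_sortedWord]

lemma sortedWord_injective : Function.Injective (sortedWord d) := by
  intro m m' h
  rw [← cnt_sortedWord (d := d) m, ← cnt_sortedWord (d := d) m', h]

lemma length_sortedWord (m : Fin d →₀ ℕ) :
    (sortedWord d m).length = m.sum fun _ e => e := by
  rw [sortedWord, List.length_flatMap]
  rw [Finsupp.sum_fintype _ _ (fun _ => rfl)]
  rw [← Fin.sum_univ_def]
  simp

lemma sorted_sortedWord (m : Fin d →₀ ℕ) : (sortedWord d m).Pairwise (· ≤ ·) := by
  rw [sortedWord]
  have h : ∀ l : List (Fin d), l.Pairwise (· ≤ ·) →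
      (l.flatMap fun j => List.replicate (m j) j).Pairwise (· ≤ ·) := by
    intro l hl
    induction l with
    | nil => simp
    | cons j t ih =>
        rw [List.flatMap_cons]
        rw [List.pairwise_append]
        refine ⟨List.pairwise_replicate.2 (Or.inr le_rfl), ih hl.of_cons, ?_⟩
        intro x hx y hy
        rw [List.eq_of_mem_replicate hx]
        obtain ⟨j', hj', hy'⟩ := List.mem_flatMap.1 hy
        rw [List.eq_of_mem_replicate hy']
        exact List.rel_of_pairwise_cons hl hj'
  exact h _ ((List.pairwise_lt_finRange d).imp le_of_lt)

lemma cnt_replicate (L : Fin d) (c : ℕ) : cnt (List.replicate c L) = Finsupp.single L c := by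
  ext i
  rw [cnt_apply, List.count_replicate, Finsupp.single_apply]
  by_cases h : L = i <;> simp [h]

lemma sortedWord_eq_of_sorted {w : List (Fin d)} (hw : w.Pairwise (· ≤ ·)) :
    sortedWord d (cnt w) = w := by
  apply List.Perm.eq_of_pairwise' (sorted_sortedWord _) hw
  rw [List.perm_iff_count]
  intro i
  rw [count_sortedWord]
  rfl

lemma sortedWord_single (L : Fin d) (c : ℕ) :
    sortedWord d (Finsupp.single L c) = List.replicate c L := by
  rw [← cnt_replicate]
  apply sortedWord_eq_of_sorted
  exact List.pairwise_replicate.2 (Or.inr le_rfl)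

end HRS
namespace HRS
open FreeAlgebra MonoidAlgebra FreeMonoid
variable {k : Type*} [Field k] {d : ℕ}

lemma coeff_finsupp_sum {ι M : Type*} [Zero M] (s : ι →₀ M) (F : ι → M → FA k d)
    (w : List (Fin d)) :
    coeff k d (s.sum F) w = s.sum fun i a => coeff k d (F i a) w := by
  rw [coeff_def, map_finsuppSum]
  simp only [Finsupp.sum, MonoidAlgebra.coeff_sum, Finsupp.finset_sum_apply]
  rfl

lemma coeff_liftPoly_sorted (g : MvPolynomial (Fin d) k) (m0 : Fin d →₀ ℕ) :
    coeff k d (liftPoly k d g) (sortedWord d m0) = MvPolynomial.coeff m0 g := by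
  classical
  rw [liftPoly, coeff_finsupp_sum]
  have h : (Finsupp.sum (AddMonoidAlgebra.coeff g) fun i a => coeff k d (a • mono k d (sortedWord d i)) (sortedWord d m0))
      = Finsupp.sum (AddMonoidAlgebra.coeff g) fun m c => if m = m0 then c else 0 :=
    Finsupp.sum_congr fun m _ => by
      rw [coeff_smul, coeff_mono]
      by_cases hm : m = m0
      · subst hm; simp
      · have hne : sortedWord d m0 ≠ sortedWord d m := fun hc =>
          hm (sortedWord_injective hc).symm
        simp [hne, hm]
  rw [h, Finsupp.sum_ite_self_eq']
  rfl

lemma coeff_liftPoly_ne (g : MvPolynomial (Fin d) k) (w : List (Fin d))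
    (h : ∀ m ∈ g.support, w ≠ sortedWord d m) :
    coeff k d (liftPoly k d g) w = 0 := by
  rw [liftPoly, coeff_finsupp_sum, Finsupp.sum]
  apply Finset.sum_eq_zero
  intro m hm
  rw [coeff_smul, coeff_mono, if_neg (h m hm), mul_zero]

lemma mem_support_iff_coeff (x : FA k d) (m : FreeMonoid (Fin d)) :
    m ∈ (E x).coeff.support ↔ coeff k d x (FreeMonoid.toList m) ≠ 0 := by
  rw [Finsupp.mem_support_iff, coeff_def, FreeMonoid.ofList_toList]

/-- The termination measure. -/
noncomputable def μ (x : FA k d) : ℕ :=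
  ∑ j ∈ (E x).coeff.support.image (fun m => Nval d (FreeMonoid.toList m)), 2 ^ j

lemma sum_pow_two (K : ℕ) : ∑ j ∈ Finset.range K, 2 ^ j = 2 ^ K - 1 := by
  induction K with
  | zero => simp
  | succ K ih =>
      rw [Finset.sum_range_succ, ih, pow_succ]
      have : 1 ≤ 2 ^ K := Nat.one_le_two_pow
      omega

/-- Smallness hypothesis on the reduction system. -/
def RuleSmall (R : Set (List (Fin d) × FA k d)) : Prop :=
  ∀ s φ, (s, φ) ∈ R → ∀ w : List (Fin d),
    coeff k d φ w ≠ 0 → Nval d w < Nval d s ∧ w.length ≤ s.length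

lemma step_measure {R : Set (List (Fin d) × FA k d)} (hR : RuleSmall R)
    {x y : FA k d} (hxy : RStep k d R x y) : μ y < μ x := by
  classical
  obtain ⟨a, s, b, φ, hrule, hc, hy⟩ := hxy
  set c := coeff k d x (a ++ s ++ b) with hcdef
  set K := Nval d (a ++ s ++ b) with hK
  -- words of a·φ·b are all smaller than K
  have hsmall : ∀ w : List (Fin d),
      coeff k d (mono k d a * φ * mono k d b) w ≠ 0 → Nval d w < K := by
    intro w hw
    have hex : ∃ v, a ++ v ++ b = w := by
      by_contra hno
      push_neg at hno
      exact hw (coeff_conj_zero a b φ w hno)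
    obtain ⟨v, rfl⟩ := hex
    rw [coeff_conj] at hw
    obtain ⟨h1, h2⟩ := hR s φ hrule v hw
    exact Nval_subst h2 h1
  have hmonoasb : mono k d a * mono k d s * mono k d b = mono k d (a ++ s ++ b) := by
    rw [mono_append, mono_append]
  -- coefficient formula for y
  have hcoeffy : ∀ w : List (Fin d), coeff k d y w
      = coeff k d x w + c * coeff k d (mono k d a * φ * mono k d b) w
        - c * (if w = a ++ s ++ b then 1 else 0) := by
    intro w
    rw [hy, coeff_add, coeff_smul, coeff_sub, hmonoasb, coeff_mono]
    ring
  -- the coefficient at a++s++b vanishes in y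
  have hyasb : coeff k d y (a ++ s ++ b) = 0 := by
    rw [hcoeffy, if_pos rfl]
    have : coeff k d (mono k d a * φ * mono k d b) (a ++ s ++ b) = 0 := by
      by_contra hne
      exact lt_irrefl _ (hsmall _ hne)
    rw [this]
    ring
  -- support of y
  have hsupp : ∀ m ∈ (E y).coeff.support,
      (m ∈ (E x).coeff.support ∧ Nval d (FreeMonoid.toList m) ≠ K)
        ∨ Nval d (FreeMonoid.toList m) < K := by
    intro m hm
    rw [mem_support_iff_coeff] at hm
    have hmne : FreeMonoid.toList m ≠ a ++ s ++ b := by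
      intro hcon
      rw [hcon] at hm
      exact hm hyasb
    rw [hcoeffy, if_neg hmne] at hm
    by_cases h2 : coeff k d (mono k d a * φ * mono k d b) (FreeMonoid.toList m) = 0
    · left
      rw [h2, mul_zero, add_zero, sub_zero] at hm
      refine ⟨(mem_support_iff_coeff _ _).2 hm, ?_⟩
      intro hcon
      apply hmne
      have := Nval_inj (d := d) (a₁ := FreeMonoid.toList m) (a₂ := a ++ s ++ b) hcon
      exact this
    · right
      exact hsmall _ h2
  -- now the numeric estimate
  set ν : FreeMonoid (Fin d) → ℕ := fun m => Nval d (FreeMonoid.toList m) with hν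
  have hνinj : Function.Injective ν := by
    intro m m' h
    have := Nval_inj (d := d) h
    exact FreeMonoid.toList.injective this
  set Tx := (E x).coeff.support.image ν with hTx
  set Ty := (E y).coeff.support.image ν with hTy
  have hKTx : K ∈ Tx := by
    rw [hTx]
    apply Finset.mem_image.2
    refine ⟨FreeMonoid.ofList (a ++ s ++ b), ?_, rfl⟩
    rw [mem_support_iff_coeff]
    exact hc
  have hsub : Ty ⊆ (Tx.erase K) ∪ Finset.range K := by
    intro j hj
    obtain ⟨m, hm, rfl⟩ := Finset.mem_image.1 hj
    rcases hsupp m hm with ⟨hmx, hne⟩ | hlt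
    · exact Finset.mem_union_left _ (Finset.mem_erase.2 ⟨hne, Finset.mem_image_of_mem _ hmx⟩)
    · exact Finset.mem_union_right _ (Finset.mem_range.2 hlt)
  have h1 : μ y ≤ ∑ j ∈ (Tx.erase K) ∪ Finset.range K, 2 ^ j :=
    Finset.sum_le_sum_of_subset hsub
  have h2 : ∑ j ∈ (Tx.erase K) ∪ Finset.range K, 2 ^ j
      ≤ ∑ j ∈ Tx.erase K, 2 ^ j + ∑ j ∈ Finset.range K, 2 ^ j := by
    rw [← Finset.union_sdiff_self_eq_union, Finset.sum_union Finset.sdiff_disjoint.symm]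
    exact Nat.add_le_add_left (Finset.sum_le_sum_of_subset (Finset.sdiff_subset)) _
  have h3 : 2 ^ K + ∑ j ∈ Tx.erase K, 2 ^ j = μ x := Finset.add_sum_erase _ _ hKTx
  have h4 := sum_pow_two K
  have h5 : 1 ≤ 2 ^ K := Nat.one_le_two_pow
  have hμy : μ y = ∑ j ∈ Ty, 2 ^ j := rfl
  omega

/-- Every element is reduction finite when the rules are small. -/
lemma reduction_finite_all {R : Set (List (Fin d) × FA k d)} (hR : RuleSmall R)
    (x : FA k d) : Acc (fun v u => RStep k d R u v) x := by
  have H : ∀ N, ∀ x : FA k d, μ x < N → Acc (fun v u => RStep k d R u v) x := by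
    intro N
    induction N with
    | zero => intro x hx; omega
    | succ N ih =>
        intro x hx
        constructor
        intro y hy
        exact ih y (by have := step_measure hR hy; omega)
  exact H (μ x + 1) x (by omega)

/-- Every element reduces to some normal form. -/
lemma exists_normal_form {R : Set (List (Fin d) × FA k d)} (hR : RuleSmall R)
    (x : FA k d) : ∃ y, Relation.ReflTransGen (RStep k d R) x y ∧ NormalForm k d R y := by
  classical
  have H : ∀ N, ∀ x : FA k d, μ x < N →
      ∃ y, Relation.ReflTransGen (RStep k d R) x y ∧ NormalForm k d R y := by
    intro N
    induction N with
    | zero => intro x hx; omega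
    | succ N ih =>
        intro x hx
        by_cases h : ∃ z, RStep k d R x z
        · obtain ⟨z, hz⟩ := h
          obtain ⟨y, hy1, hy2⟩ := ih z (by have := step_measure hR hz; omega)
          exact ⟨y, Relation.ReflTransGen.head hz hy1, hy2⟩
        · push_neg at h
          exact ⟨x, Relation.ReflTransGen.refl, fun z hz => h z hz⟩
  exact H (μ x + 1) x (by omega)

end HRS
namespace HRS
open FreeAlgebra MonoidAlgebra FreeMonoid
variable {k : Type*} [Field k] {d n : ℕ} {f : MvPolynomial (Fin d) k}

lemma mem_hypRS (hd : 0 < d) {p : List (Fin d) × FA k d} :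
    p ∈ hypRS k d n f hd ↔
      p = (List.replicate n ⟨d - 1, Nat.sub_one_lt_of_lt hd⟩,
          mono k d (List.replicate n ⟨d - 1, Nat.sub_one_lt_of_lt hd⟩) - liftPoly k d f)
      ∨ ∃ i j : Fin d, i < j ∧ p = ([j, i], mono k d [i, j]) := by
  rw [hypRS, Set.mem_union, Set.mem_singleton_iff]
  rfl

lemma Nval_comm {i j : Fin d} (hij : i < j) : Nval d [i, j] < Nval d [j, i] := by
  have e1 : Nval d [i, j] = ((i:ℕ)+1) * (d+1)^1 + (((j:ℕ)+1) * (d+1)^0 + 0) := rfl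
  have e2 : Nval d [j, i] = ((j:ℕ)+1) * (d+1)^1 + (((i:ℕ)+1) * (d+1)^0 + 0) := rfl
  have hij' : (i : ℕ) < (j : ℕ) := hij
  rw [e1, e2]
  simp only [pow_one, pow_zero, mul_one, add_zero]
  have h3 : ((i:ℕ)+1)*(d+1) + (d+1) ≤ ((j:ℕ)+1)*(d+1) := by
    have h4 : ((i:ℕ)+2)*(d+1) ≤ ((j:ℕ)+1)*(d+1) :=
      Nat.mul_le_mul_right _ (by omega)
    nlinarith
  have h5 : (j:ℕ) < d := j.2
  omega

lemma ruleSmall_hypRS (hd : 0 < d) (hn : 2 ≤ n)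
    (hlead : f.coeff (Finsupp.single ⟨d - 1, Nat.sub_one_lt_of_lt hd⟩ n) = 1)
    (hdeg : ∀ m ∈ f.support, (m.sum fun _ e => e) ≤ n) :
    RuleSmall (hypRS k d n f hd) := by
  intro s φ hmem w hw
  set L : Fin d := ⟨d - 1, by omega⟩ with hL
  rcases (mem_hypRS hd).1 hmem with h | ⟨i, j, hij, h⟩
  · have hs : s = List.replicate n L := congrArg Prod.fst h
    have hφ : φ = mono k d (List.replicate n L) - liftPoly k d f := congrArg Prod.snd h
    subst hs
    rw [hφ, coeff_sub, coeff_mono] at hw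
    by_cases hws : w = List.replicate n L
    · exfalso
      apply hw
      rw [if_pos hws, hws, ← sortedWord_single L n, coeff_liftPoly_sorted, hlead]
      ring
    · rw [if_neg hws] at hw
      have hlp : coeff k d (liftPoly k d f) w ≠ 0 := by
        intro h0; rw [h0] at hw; exact hw (by ring)
      have hex : ∃ m ∈ f.support, w = sortedWord d m := by
        by_contra hno
        push_neg at hno
        exact hlp (coeff_liftPoly_ne f w hno)
      obtain ⟨m, hm, rfl⟩ := hex
      have hlen : (sortedWord d m).length ≤ n := by
        rw [length_sortedWord]; exact hdeg m hm
      constructor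
      · exact Nval_lt_max L rfl hd hlen hws
      · simpa using hlen
  · have hs : s = [j, i] := congrArg Prod.fst h
    have hφ : φ = mono k d [i, j] := congrArg Prod.snd h
    subst hs
    rw [hφ, coeff_mono] at hw
    have hwij : w = [i, j] := by
      by_contra hc; rw [if_neg hc] at hw; exact hw rfl
    subst hwij
    exact ⟨Nval_comm hij, le_rfl⟩

/-- A non-sorted word has an adjacent descent. -/
lemma exists_descent {w : List (Fin d)} (hw : ¬ w.Pairwise (· ≤ ·)) :
    ∃ (a : List (Fin d)) (i j : Fin d) (b : List (Fin d)), i < j ∧ w = a ++ [j, i] ++ b := by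
  induction w with
  | nil => exact absurd List.Pairwise.nil hw
  | cons x t ih =>
      by_cases ht : t.Pairwise (· ≤ ·)
      · have hx : ∃ y ∈ t, ¬ x ≤ y := by
          by_contra hno
          push_neg at hno
          exact hw (List.pairwise_cons.2 ⟨hno, ht⟩)
        obtain ⟨y, hy, hxy⟩ := hx
        cases t with
        | nil => simp at hy
        | cons y0 t' =>
            have hy0 : y0 < x := by
              rcases List.mem_cons.1 hy with rfl | hy'
              · omega
              · have := List.rel_of_pairwise_cons ht hy'
                omega
            exact ⟨[], y0, x, t', hy0, rfl⟩
      · obtain ⟨a, i, j, b, hij, hab⟩ := ih ht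
        exact ⟨x :: a, i, j, b, hij, by rw [hab]; rfl⟩

/-- A sorted word ends with a block of its largest letters. -/
lemma sorted_top_suffix (L : Fin d) (hL : ∀ x : Fin d, x ≤ L) {w : List (Fin d)}
    (hw : w.Pairwise (· ≤ ·)) : ∃ a, w = a ++ List.replicate (w.count L) L := by
  induction w with
  | nil => exact ⟨[], by simp⟩
  | cons x t ih =>
      by_cases hx : x = L
      · subst hx
        have ht : t = List.replicate t.length x := by
          rw [List.eq_replicate_iff]
          refine ⟨rfl, fun y hy => ?_⟩
          have h1 := List.rel_of_pairwise_cons hw hy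
          exact le_antisymm (hL y) h1
        refine ⟨[], ?_⟩
        rw [List.nil_append]
        have hcount : (x :: t).count x = t.length + 1 := by
          rw [List.count_cons_self]
          conv_lhs => rw [ht]
          rw [List.count_replicate_self]
        rw [hcount]
        conv_lhs => rw [ht]
        rfl
      · obtain ⟨a, ha⟩ := ih hw.of_cons
        refine ⟨x :: a, ?_⟩
        have hcount : (x :: t).count L = t.count L :=
          List.count_cons_of_ne hx
        rw [hcount, List.cons_append, ← ha]

/-- Support of a normal form consists of sorted words with small top-letter count. -/
lemma normal_support (hd : 0 < d) {y : FA k d} (hy : NormalForm k d (hypRS k d n f hd) y) :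
    ∀ m ∈ (E y).coeff.support, (FreeMonoid.toList m).Pairwise (· ≤ ·) ∧
      (FreeMonoid.toList m).count ⟨d - 1, Nat.sub_one_lt_of_lt hd⟩ < n := by
  intro m hm
  rw [mem_support_iff_coeff] at hm
  set L : Fin d := ⟨d - 1, by omega⟩ with hLdef
  set w := FreeMonoid.toList m with hwdef
  by_contra hcon
  rw [not_and_or] at hcon
  have hL : ∀ x : Fin d, x ≤ L := by
    intro x
    have := x.2
    exact Fin.le_def.2 (by simp [hLdef]; omega)
  -- in either case we find a rule applying inside w
  have hstep : ∃ (a s b : List (Fin d)) (φ : FA k d),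
      (s, φ) ∈ hypRS k d n f hd ∧ w = a ++ s ++ b := by
    by_cases hsort : w.Pairwise (· ≤ ·)
    · have hcnt : n ≤ w.count L := by
        rcases hcon with hns | hcnt
        · exact absurd hsort hns
        · push_neg at hcnt; exact hcnt
      set c0 := w.count L with hc0def
      obtain ⟨a, ha⟩ := sorted_top_suffix L hL hsort
      refine ⟨a, List.replicate n L, List.replicate (c0 - n) L,
        mono k d (List.replicate n L) - liftPoly k d f,
        (mem_hypRS hd).2 (Or.inl rfl), ?_⟩
      rw [ha, List.append_assoc, ← List.replicate_add]
      congr 2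
      omega
    · obtain ⟨a, i, j, b, hij, hab⟩ := exists_descent hsort
      exact ⟨a, [j, i], b, mono k d [i, j],
        (mem_hypRS hd).2 (Or.inr ⟨i, j, hij, rfl⟩), hab⟩
  obtain ⟨a, s, b, φ, hmem, hws⟩ := hstep
  rw [hws] at hm
  exact hy _ ⟨a, s, b, φ, hmem, hm, rfl⟩

end HRS
namespace HRS
open FreeAlgebra MonoidAlgebra FreeMonoid
variable {k : Type*} [Field k] {d n : ℕ} {f : MvPolynomial (Fin d) k}

/-- The abelianization map to the polynomial ring. -/
noncomputable def πa (k : Type*) [Field k] (d : ℕ) :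
    FA k d →ₐ[k] MvPolynomial (Fin d) k :=
  FreeAlgebra.lift k fun i => MvPolynomial.X i

lemma cnt_nil : cnt ([] : List (Fin d)) = 0 := by
  ext i; simp

lemma cnt_cons (a : Fin d) (t : List (Fin d)) :
    cnt (a :: t) = Finsupp.single a 1 + cnt t := by
  ext i
  rw [Finsupp.add_apply, cnt_apply, cnt_apply, Finsupp.single_apply, List.count_cons]
  by_cases h : i = a
  · subst h; simp; omega
  · simp [h, Ne.symm h]

lemma πa_mono (w : List (Fin d)) :
    πa k d (mono k d w) = MvPolynomial.monomial (cnt w) 1 := by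
  induction w with
  | nil =>
      show πa k d 1 = _
      rw [map_one, cnt_nil, MvPolynomial.monomial_zero', MvPolynomial.C_1]
  | cons a t ih =>
      have h : mono k d (a :: t) = FreeAlgebra.ι k a * mono k d t := by simp [mono]
      rw [h, map_mul, ih, πa, FreeAlgebra.lift_ι_apply, cnt_cons]
      rw [MvPolynomial.X, MvPolynomial.monomial_mul, one_mul]

lemma πa_liftPoly (g : MvPolynomial (Fin d) k) : πa k d (liftPoly k d g) = g := by
  rw [liftPoly, map_finsuppSum]
  have h : (Finsupp.sum (AddMonoidAlgebra.coeff g) fun m c => πa k d (c • mono k d (sortedWord d m)))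
      = Finsupp.sum (AddMonoidAlgebra.coeff g) fun m c => MvPolynomial.monomial m c :=
    Finsupp.sum_congr fun m _ => by
      rw [map_smul, πa_mono, cnt_sortedWord, MvPolynomial.smul_monomial, smul_eq_mul, mul_one]
  rw [h]
  exact g.support_sum_monomial_coeff

/-- The auxiliary substitution into `Polynomial` over `MvPolynomial`,
    separating out the top variable. -/
noncomputable def ψ (k : Type*) [Field k] (d : ℕ) (L : Fin d) :
    MvPolynomial (Fin d) k →+* Polynomial (MvPolynomial (Fin d) k) :=
  MvPolynomial.eval₂Hom (Polynomial.C.comp MvPolynomial.C)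
    (fun i => if i = L then Polynomial.X else Polynomial.C (MvPolynomial.X i))

lemma ψ_injective (L : Fin d) : Function.Injective (ψ k d L) := by
  have h : ∀ g, Polynomial.eval₂ (RingHom.id _) (MvPolynomial.X L) (ψ k d L g) = g := by
    intro g
    have := MvPolynomial.ringHom_ext (f := (Polynomial.eval₂RingHom
        (RingHom.id (MvPolynomial (Fin d) k)) (MvPolynomial.X L)).comp (ψ k d L))
      (g := RingHom.id _) ?_ ?_
    · exact congrArg (fun F => (F : MvPolynomial (Fin d) k →+* _) g) this
    · intro r
      simp [ψ]
    · intro i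
      by_cases hi : i = L
      · subst hi; simp [ψ]
      · simp [ψ, hi]
  intro g g' hgg'
  rw [← h g, ← h g', hgg']

lemma ψ_monomial_natDegree (L : Fin d) (m : Fin d →₀ ℕ) (c : k) :
    (ψ k d L (MvPolynomial.monomial m c)).natDegree ≤ m L := by
  rw [ψ, MvPolynomial.eval₂Hom_monomial]
  apply le_trans (Polynomial.natDegree_mul_le)
  have h1 : (Polynomial.C.comp MvPolynomial.C c : Polynomial (MvPolynomial (Fin d) k)).natDegree = 0 :=
    Polynomial.natDegree_C _
  rw [h1, zero_add]
  rw [Finsupp.prod]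
  apply le_trans (Polynomial.natDegree_prod_le m.support _)
  have h2 : ∀ i ∈ m.support,
      ((if i = L then Polynomial.X else Polynomial.C (MvPolynomial.X i)) ^ (m i)
        : Polynomial (MvPolynomial (Fin d) k)).natDegree
      ≤ if i = L then m L else 0 := by
    intro i _
    by_cases hi : i = L
    · subst hi
      simp [Polynomial.natDegree_X_pow]
    · simp only [if_neg hi]
      apply le_trans Polynomial.natDegree_pow_le
      simp [Polynomial.natDegree_C]
  apply le_trans (Finset.sum_le_sum h2)
  rw [Finset.sum_ite_eq' m.support L (fun _ => m L)]
  split <;> simp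

lemma ψ_coeff_high (L : Fin d) {g : MvPolynomial (Fin d) k}
    (hg : ∀ μ ∈ g.support, μ L < n) {j : ℕ} (hj : n ≤ j) :
    (ψ k d L g).coeff j = 0 := by
  conv_lhs => rw [g.as_sum]
  rw [map_sum, Polynomial.finset_sum_coeff]
  apply Finset.sum_eq_zero
  intro m hm
  apply Polynomial.coeff_eq_zero_of_natDegree_lt
  exact lt_of_le_of_lt (ψ_monomial_natDegree L m _) (lt_of_lt_of_le (hg m hm) hj)

lemma ψ_f_monic (hd : 0 < d) (hn : 2 ≤ n)
    (hlead : f.coeff (Finsupp.single ⟨d - 1, Nat.sub_one_lt_of_lt hd⟩ n) = 1)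
    (hdeg : ∀ m ∈ f.support, (m.sum fun _ e => e) ≤ n)
    (hlex : ∀ m ∈ f.support, m ≠ Finsupp.single ⟨d - 1, Nat.sub_one_lt_of_lt hd⟩ n →
      m ⟨d - 1, Nat.sub_one_lt_of_lt hd⟩ < n) :
    (ψ k d ⟨d - 1, Nat.sub_one_lt_of_lt hd⟩ f).coeff n = 1 ∧
      (ψ k d ⟨d - 1, Nat.sub_one_lt_of_lt hd⟩ f).natDegree ≤ n := by
  set L : Fin d := ⟨d - 1, by omega⟩ with hLdef
  have hmemL : ∀ m ∈ f.support, m L ≤ n := by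
    intro m hm
    refine le_trans ?_ (hdeg m hm)
    rw [Finsupp.sum_fintype _ _ (fun _ => rfl)]
    exact Finset.single_le_sum (f := fun i => m i) (fun _ _ => Nat.zero_le _)
      (Finset.mem_univ L)
  constructor
  · conv_lhs => rw [f.as_sum]
    rw [map_sum, Polynomial.finset_sum_coeff]
    have hsingle : Finsupp.single L n ∈ f.support := by
      rw [MvPolynomial.mem_support_iff, hlead]
      exact one_ne_zero
    rw [Finset.sum_eq_single_of_mem (Finsupp.single L n) hsingle]
    · rw [hlead]
      have : ψ k d L (MvPolynomial.monomial (Finsupp.single L n) 1)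
          = Polynomial.X ^ n := by
        rw [ψ, MvPolynomial.eval₂Hom_monomial]
        rw [Finsupp.prod_single_index (by simp)]
        simp
      rw [this, Polynomial.coeff_X_pow, if_pos rfl]
    · intro m hm hne
      apply Polynomial.coeff_eq_zero_of_natDegree_lt
      exact lt_of_le_of_lt (ψ_monomial_natDegree L m _) (hlex m hm hne)
  · apply Polynomial.natDegree_le_iff_coeff_eq_zero.2
    intro j hj
    conv_lhs => rw [f.as_sum]
    rw [map_sum, Polynomial.finset_sum_coeff]
    apply Finset.sum_eq_zero
    intro m hm
    apply Polynomial.coeff_eq_zero_of_natDegree_lt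
    exact lt_of_le_of_lt (ψ_monomial_natDegree L m _) (lt_of_le_of_lt (hmemL m hm) hj)

/-- Main commutative-algebra input: a polynomial in the ideal `(f)` whose monomials
all have top-variable exponent `< n` must vanish. -/
lemma poly_vanish (hd : 0 < d) (hn : 2 ≤ n)
    (hlead : f.coeff (Finsupp.single ⟨d - 1, Nat.sub_one_lt_of_lt hd⟩ n) = 1)
    (hdeg : ∀ m ∈ f.support, (m.sum fun _ e => e) ≤ n)
    (hlex : ∀ m ∈ f.support, m ≠ Finsupp.single ⟨d - 1, Nat.sub_one_lt_of_lt hd⟩ n →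
      m ⟨d - 1, Nat.sub_one_lt_of_lt hd⟩ < n)
    {g : MvPolynomial (Fin d) k}
    (hg : ∀ μ ∈ g.support, μ ⟨d - 1, Nat.sub_one_lt_of_lt hd⟩ < n)
    (hmem : g ∈ Ideal.span {f}) : g = 0 := by
  set L : Fin d := ⟨d - 1, by omega⟩ with hLdef
  obtain ⟨q, rfl⟩ := Ideal.mem_span_singleton'.1 hmem
  by_cases hq : q = 0
  · rw [hq, zero_mul]
  · exfalso
    obtain ⟨hc1, hc2⟩ := ψ_f_monic hd hn hlead hdeg hlex
    have hfM : (ψ k d L f).Monic := by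
      have hdeg1 : (ψ k d L f).natDegree = n := by
        apply le_antisymm hc2
        apply Polynomial.le_natDegree_of_ne_zero
        rw [hc1]; exact one_ne_zero
      rw [Polynomial.Monic, Polynomial.leadingCoeff, hdeg1, hc1]
    have hψq : ψ k d L q ≠ 0 := fun hc => hq (ψ_injective L (by rw [hc, map_zero]))
    have hψf : ψ k d L f ≠ 0 := hfM.ne_zero
    have hψg : ψ k d L (q * f) = ψ k d L q * ψ k d L f := map_mul _ _ _
    have hne : ψ k d L (q * f) ≠ 0 := by
      rw [hψg]
      exact mul_ne_zero hψq hψf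
    have hdeg2 : (ψ k d L (q * f)).natDegree
        = (ψ k d L q).natDegree + n := by
      rw [hψg, Polynomial.natDegree_mul hψq hψf]
      congr 1
      apply le_antisymm hc2
      apply Polynomial.le_natDegree_of_ne_zero
      rw [hc1]; exact one_ne_zero
    have hcoeff : (ψ k d L (q * f)).coeff ((ψ k d L (q * f)).natDegree) ≠ 0 :=
      Polynomial.leadingCoeff_ne_zero.2 hne
    apply hcoeff
    apply ψ_coeff_high (n := n) L hg
    omega

end HRS
namespace HRS
open FreeAlgebra MonoidAlgebra FreeMonoid
variable {k : Type*} [Field k] {d n : ℕ} {f : MvPolynomial (Fin d) k}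

lemma hypProj_apply (x : FA k d) :
    hypProj k d f x = Ideal.Quotient.mk (Ideal.span {f}) (πa k d x) := rfl

lemma πa_rule_mem (hd : 0 < d) {s : List (Fin d)} {φ : FA k d}
    (hmem : (s, φ) ∈ hypRS k d n f hd) :
    πa k d (mono k d s - φ) ∈ Ideal.span {f} := by
  rcases (mem_hypRS hd).1 hmem with h | ⟨i, j, hij, h⟩
  · have hs : s = List.replicate n ⟨d - 1, by omega⟩ := congrArg Prod.fst h
    have hφ : φ = mono k d (List.replicate n ⟨d - 1, by omega⟩) - liftPoly k d f :=
      congrArg Prod.snd h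
    rw [hs, hφ, sub_sub_cancel, πa_liftPoly]
    exact Ideal.subset_span rfl
  · have hs : s = [j, i] := congrArg Prod.fst h
    have hφ : φ = mono k d [i, j] := congrArg Prod.snd h
    rw [hs, hφ, map_sub, πa_mono, πa_mono]
    have hcnt : cnt ([j, i] : List (Fin d)) = cnt ([i, j] : List (Fin d)) := by
      ext x
      rw [cnt_apply, cnt_apply]
      simp [List.count_cons]
      omega
    rw [hcnt, sub_self]
    exact Ideal.zero_mem _

lemma step_diff (hd : 0 < d) {x y : FA k d}
    (h : RStep k d (hypRS k d n f hd) x y) :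
    x - y ∈ TwoSidedIdeal.span
        {u : FA k d | ∃ p ∈ hypRS k d n f hd, u = mono k d p.1 - p.2} ∧
      hypProj k d f x = hypProj k d f y := by
  obtain ⟨a, s, b, φ, hmem, hc, hy⟩ := h
  set c := coeff k d x (a ++ s ++ b) with hcdef
  have hxy : x - y = c • (mono k d a * (mono k d s - φ) * mono k d b) := by
    rw [hy, mul_sub, sub_mul, smul_sub, smul_sub]
    abel
  constructor
  · rw [hxy, Algebra.smul_def]
    apply TwoSidedIdeal.mul_mem_left
    apply TwoSidedIdeal.mul_mem_right
    apply TwoSidedIdeal.mul_mem_left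
    exact TwoSidedIdeal.subset_span ⟨(s, φ), hmem, rfl⟩
  · have hmemxy : πa k d (x - y) ∈ Ideal.span {f} := by
      rw [hxy, map_smul, Algebra.smul_def]
      apply Ideal.mul_mem_left
      rw [map_mul, map_mul]
      apply Ideal.mul_mem_right
      apply Ideal.mul_mem_left
      exact πa_rule_mem hd hmem
    have h0 : hypProj k d f (x - y) = 0 := by
      rw [hypProj_apply, Ideal.Quotient.eq_zero_iff_mem]
      exact hmemxy
    rw [map_sub] at h0
    exact sub_eq_zero.1 h0

lemma path_props (hd : 0 < d) {x y : FA k d}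
    (h : Relation.ReflTransGen (RStep k d (hypRS k d n f hd)) x y) :
    x - y ∈ TwoSidedIdeal.span
        {u : FA k d | ∃ p ∈ hypRS k d n f hd, u = mono k d p.1 - p.2} ∧
      hypProj k d f x = hypProj k d f y := by
  induction h with
  | refl => simp
  | @tail u v h1 h2 ih =>
      obtain ⟨hm2, hp2⟩ := step_diff hd h2
      refine ⟨?_, ?_⟩
      · have e : x - v = (x - u) + (u - v) := by abel
        rw [e]
        exact add_mem ih.1 hm2
      · rw [ih.2, hp2]

lemma nf_eq_zero (hd : 0 < d) (hn : 2 ≤ n)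
    (hlead : f.coeff (Finsupp.single ⟨d - 1, Nat.sub_one_lt_of_lt hd⟩ n) = 1)
    (hdeg : ∀ m ∈ f.support, (m.sum fun _ e => e) ≤ n)
    (hlex : ∀ m ∈ f.support, m ≠ Finsupp.single ⟨d - 1, Nat.sub_one_lt_of_lt hd⟩ n →
      m ⟨d - 1, Nat.sub_one_lt_of_lt hd⟩ < n)
    {y : FA k d}
    (hsupp : ∀ m ∈ (E y).coeff.support, (FreeMonoid.toList m).Pairwise (· ≤ ·) ∧
      (FreeMonoid.toList m).count ⟨d - 1, Nat.sub_one_lt_of_lt hd⟩ < n)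
    (hker : hypProj k d f y = 0) : y = 0 := by
  classical
  set L : Fin d := ⟨d - 1, by omega⟩ with hLdef
  have hpiy : πa k d y = ∑ m ∈ (E y).coeff.support,
      ((E y).coeff m) • MvPolynomial.monomial (cnt (FreeMonoid.toList m)) (1 : k) := by
    conv_lhs => rw [eq_sum_mono y]
    rw [map_finsuppSum, Finsupp.sum]
    apply Finset.sum_congr rfl
    intro m _
    rw [map_smul, πa_mono]
  have hext : ∀ m0 ∈ (E y).coeff.support,
      MvPolynomial.coeff (cnt (FreeMonoid.toList m0)) (πa k d y) = (E y).coeff m0 := by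
    intro m0 hm0
    rw [hpiy, MvPolynomial.coeff_sum]
    rw [Finset.sum_eq_single_of_mem m0 hm0]
    · rw [MvPolynomial.coeff_smul, MvPolynomial.coeff_monomial, if_pos rfl,
        smul_eq_mul, mul_one]
    · intro m hm hne
      rw [MvPolynomial.coeff_smul, MvPolynomial.coeff_monomial]
      rw [if_neg, smul_zero]
      intro hcon
      apply hne
      have h1 : FreeMonoid.toList m = FreeMonoid.toList m0 := by
        rw [← sortedWord_eq_of_sorted (hsupp m hm).1,
          ← sortedWord_eq_of_sorted (hsupp m0 hm0).1, hcon]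
      exact FreeMonoid.toList.injective h1
  have hsp : ∀ μ ∈ (πa k d y).support, μ L < n := by
    intro μ hμ
    rw [MvPolynomial.mem_support_iff] at hμ
    have hex : ∃ m ∈ (E y).coeff.support, cnt (FreeMonoid.toList m) = μ := by
      by_contra hno
      push_neg at hno
      apply hμ
      rw [hpiy, MvPolynomial.coeff_sum]
      apply Finset.sum_eq_zero
      intro m hm
      rw [MvPolynomial.coeff_smul, MvPolynomial.coeff_monomial, if_neg (hno m hm),
        smul_zero]
    obtain ⟨m, hm, rfl⟩ := hex
    rw [cnt_apply]
    exact (hsupp m hm).2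
  have hmem : πa k d y ∈ Ideal.span {f} := by
    rw [← Ideal.Quotient.eq_zero_iff_mem]
    exact hker
  have h0 : πa k d y = 0 := poly_vanish hd hn hlead hdeg hlex hsp hmem
  have hEy : E y = 0 := by
    ext m
    by_cases hm : m ∈ (E y).coeff.support
    · rw [← hext m hm, h0, MvPolynomial.coeff_zero]
      rfl
    · rw [Finsupp.notMem_support_iff.1 hm]
      rfl
  have := congrArg E.symm hEy
  rw [AlgEquiv.symm_apply_apply, map_zero] at this
  exact this

end HRS
theorem hypersurface_reduction_system (hd : 0 < d) (hn : 2 ≤ n)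
    -- f has leading term x_dⁿ w.r.t. lex x₁ < ... < x_d:
    (hlead : f.coeff (Finsupp.single ⟨d - 1, by omega⟩ n) = 1)
    (hdeg : ∀ m ∈ f.support, (m.sum fun _ e => e) ≤ n)
    (hlex : ∀ m ∈ f.support, m ≠ Finsupp.single ⟨d - 1, by omega⟩ n →
      m ⟨d - 1, by omega⟩ < n) :
    (∀ w : List (Fin d),
      ReductionFinite k d (hypRS k d n f hd) (mono k d w) ∧
      ReductionUnique k d (hypRS k d n f hd) (mono k d w)) ∧
    TwoSidedIdeal.span {x : FA k d | ∃ p ∈ hypRS k d n f hd, x = mono k d p.1 - p.2} =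
      TwoSidedIdeal.ker (hypProj k d f) := by
  classical
  have hRS : HRS.RuleSmall (hypRS k d n f hd) := HRS.ruleSmall_hypRS hd hn hlead hdeg
  constructor
  · intro w
    constructor
    · exact HRS.reduction_finite_all hRS _
    · intro y z hy hz hny hnz
      have h1 := (HRS.path_props hd hy).2
      have h2 := (HRS.path_props hd hz).2
      have hker : hypProj k d f (y - z) = 0 := by
        rw [map_sub, ← h1, ← h2, sub_self]
      have hsupp : ∀ m ∈ (HRS.E (y - z)).coeff.support,
          (FreeMonoid.toList m).Pairwise (· ≤ ·) ∧
          (FreeMonoid.toList m).count ⟨d - 1, by omega⟩ < n := by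
        intro m hm
        rw [HRS.mem_support_iff_coeff, HRS.coeff_sub] at hm
        by_cases h : coeff k d y (FreeMonoid.toList m) = 0
        · have hz' : coeff k d z (FreeMonoid.toList m) ≠ 0 := by
            intro h0
            rw [h, h0, sub_zero] at hm
            exact hm rfl
          exact HRS.normal_support hd hnz m ((HRS.mem_support_iff_coeff _ _).2 hz')
        · exact HRS.normal_support hd hny m ((HRS.mem_support_iff_coeff _ _).2 h)
      have h0 := HRS.nf_eq_zero hd hn hlead hdeg hlex hsupp hker
      exact sub_eq_zero.1 h0
  · apply le_antisymm
    · intro x hx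
      rw [TwoSidedIdeal.mem_span_iff] at hx
      apply hx
      rintro g ⟨p, hp, rfl⟩
      rw [SetLike.mem_coe, TwoSidedIdeal.mem_ker]
      rw [HRS.hypProj_apply, Ideal.Quotient.eq_zero_iff_mem]
      exact HRS.πa_rule_mem hd (by rw [Prod.mk.eta]; exact hp)
    · intro x hx
      rw [TwoSidedIdeal.mem_ker] at hx
      obtain ⟨y, hpath, hnf⟩ := HRS.exists_normal_form hRS x
      obtain ⟨hmem, hproj⟩ := HRS.path_props hd hpath
      have hy0 : y = 0 := HRS.nf_eq_zero hd hn hlead hdeg hlex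
        (HRS.normal_support hd hnf) (by rw [← hproj]; exact hx)
      rw [hy0, sub_zero] at hmem
      exact hmem
end

section
/- Let A_λ be the algebra over an algebraically closed field k of characteristic 0 presented by the quiver with two vertices 0, 1 (idempotents e0, e1), arrows x0, x1: 0 → 1 and y0,...,y_{k-1}: 1 → 0, with relations x1 y_{j-1} - x0 y_j = λ_j e0 and y_j x0 - y_{j-1} x1 = -λ_j e1 for 1 ≤ j ≤ k-1, where λ = (λ_1,...,λ_{k-1}) ∈ k^{k-1}. If λ ≠ 0, then the multiplication map A_λ e0 ⊗_{e0 A_λ e0} e0 A_λ → A_λ is surjective; in particular A_λ is Morita equivalent to e0 A_λ e0. -/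
/-!
STATEMENT 5: For the algebra A_λ presented by the quiver with two vertices 0, 1
(idempotents e0, e1), arrows x0, x1 : 0 → 1 and y0, ..., y_{K-1} : 1 → 0, with
relations x1 y_{j-1} - x0 y_j = λ_j e0 and y_j x0 - y_{j-1} x1 = -λ_j e1 for
1 ≤ j ≤ K-1: if λ ≠ 0 then the multiplication map
A_λ e0 ⊗_{e0 A_λ e0} e0 A_λ → A_λ is surjective (i.e. the additive/k-linear span of
{a e0 b} is everything); in particular A_λ is Morita equivalent to the corner ring
e0 A_λ e0 (the module categories are equivalent).
-/

inductive QG (K : ℕ) : Type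
  | E0 : QG K
  | E1 : QG K
  | X : Fin 2 → QG K
  | Y : Fin K → QG K

variable (k : Type) [Field k] [IsAlgClosed k] [CharZero k] (K : ℕ) (lam : ℕ → k)

noncomputable abbrev gE0 : FreeAlgebra k (QG K) := FreeAlgebra.ι k QG.E0
noncomputable abbrev gE1 : FreeAlgebra k (QG K) := FreeAlgebra.ι k QG.E1
noncomputable abbrev gX (i : Fin 2) : FreeAlgebra k (QG K) := FreeAlgebra.ι k (QG.X i)
noncomputable abbrev gY (j : Fin K) : FreeAlgebra k (QG K) := FreeAlgebra.ι k (QG.Y j)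

/-- The relations of the path algebra of the quiver (vertex idempotents and
incidence relations, with paths composed diagrammatically) together with the
deformed relations x1 y_{j-1} = x0 y_j + λ_j e0 and y_j x0 = y_{j-1} x1 - λ_j e1. -/
inductive ARel : FreeAlgebra k (QG K) → FreeAlgebra k (QG K) → Prop
  | idem0 : ARel (gE0 k K * gE0 k K) (gE0 k K)
  | idem1 : ARel (gE1 k K * gE1 k K) (gE1 k K)
  | orth01 : ARel (gE0 k K * gE1 k K) 0
  | orth10 : ARel (gE1 k K * gE0 k K) 0
  | sum : ARel (gE0 k K + gE1 k K) 1
  | xpath (i : Fin 2) : ARel (gE0 k K * gX k K i * gE1 k K) (gX k K i)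
  | ypath (j : Fin K) : ARel (gE1 k K * gY k K j * gE0 k K) (gY k K j)
  | defrel1 (i : ℕ) (h : i + 1 < K) :
      ARel (gX k K 1 * gY k K ⟨i, by omega⟩)
        (gX k K 0 * gY k K ⟨i + 1, h⟩ + lam (i + 1) • gE0 k K)
  | defrel2 (i : ℕ) (h : i + 1 < K) :
      ARel (gY k K ⟨i + 1, h⟩ * gX k K 0)
        (gY k K ⟨i, by omega⟩ * gX k K 1 - lam (i + 1) • gE1 k K)

/-- The algebra A_λ. -/
noncomputable abbrev QAlg := RingQuot (ARel k K lam)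

noncomputable abbrev aE0 : QAlg k K lam := RingQuot.mkAlgHom k (ARel k K lam) (gE0 k K)

/-- The corner "ring" eAe of a ring A at an idempotent e. -/
def Corner {A : Type} [Ring A] (e : A) (_he : e * e = e) : Type := {x : A // e * x * e = x}

section CornerRing

variable {A : Type} [Ring A] {e : A}

private lemma labs (he : e * e = e) {x : A} (hx : e * x * e = x) : e * x = x := by
  conv_lhs => rw [← hx]
  rw [← mul_assoc, ← mul_assoc, he, hx]

private lemma rabs (he : e * e = e) {x : A} (hx : e * x * e = x) : x * e = x := by
  conv_lhs => rw [← hx]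
  rw [mul_assoc, he]
  exact hx

variable {he : e * e = e}

instance : Zero (Corner e he) := ⟨⟨0, by simp⟩⟩
instance : Add (Corner e he) :=
  ⟨fun a b => ⟨a.1 + b.1, by rw [mul_add, add_mul, a.2, b.2]⟩⟩
instance : Neg (Corner e he) := ⟨fun a => ⟨-a.1, by rw [mul_neg, neg_mul, a.2]⟩⟩
instance : Sub (Corner e he) :=
  ⟨fun a b => ⟨a.1 - b.1, by rw [mul_sub, sub_mul, a.2, b.2]⟩⟩
instance : SMul ℕ (Corner e he) :=
  ⟨fun n a => ⟨n • a.1, by rw [mul_smul_comm, smul_mul_assoc, a.2]⟩⟩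
instance : SMul ℤ (Corner e he) :=
  ⟨fun n a => ⟨n • a.1, by rw [mul_smul_comm, smul_mul_assoc, a.2]⟩⟩
instance : One (Corner e he) := ⟨⟨e, by rw [he, he]⟩⟩
instance : Mul (Corner e he) :=
  ⟨fun a b => ⟨a.1 * b.1, by rw [← mul_assoc, labs he a.2, mul_assoc, rabs he b.2]⟩⟩

instance : AddCommGroup (Corner e he) :=
  Function.Injective.addCommGroup (fun a => a.1) Subtype.coe_injective rfl
    (fun _ _ => rfl) (fun _ => rfl) (fun _ _ => rfl) (fun _ _ => rfl) (fun _ _ => rfl)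

instance : Ring (Corner e he) :=
  { (inferInstance : AddCommGroup (Corner e he)) with
    mul := (· * ·)
    one := 1
    mul_assoc := fun a b c => Subtype.ext (mul_assoc a.1 b.1 c.1)
    one_mul := fun a => Subtype.ext (labs he a.2)
    mul_one := fun a => Subtype.ext (rabs he a.2)
    left_distrib := fun a b c => Subtype.ext (left_distrib a.1 b.1 c.1)
    right_distrib := fun a b c => Subtype.ext (right_distrib a.1 b.1 c.1)
    zero_mul := fun a => Subtype.ext (zero_mul a.1)
    mul_zero := fun a => Subtype.ext (mul_zero a.1) }

end CornerRing


/-! ### General Morita theory for a full idempotent -/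

section Morita

open CategoryTheory Finset

variable {A : Type} [Ring A] {e : A}

/-- The "e-part" of a module, as an additive subgroup. -/
def cmSub (e : A) (M : Type) [AddCommGroup M] [Module A M] : AddSubgroup M where
  carrier := {m | e • m = m}
  add_mem' := by
    intro a b ha hb
    simp only [Set.mem_setOf_eq, smul_add] at *
    rw [ha, hb]
  zero_mem' := smul_zero e
  neg_mem' := by
    intro a ha
    simp only [Set.mem_setOf_eq] at *
    rw [smul_neg, ha]

/-- The "e-part" of a module, as a type. -/
abbrev CM (e : A) (M : Type) [AddCommGroup M] [Module A M] : Type := ↥(cmSub e M)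

lemma cm_prop {M : Type} [AddCommGroup M] [Module A M] (m : CM e M) : e • m.1 = m.1 := m.2

instance cmModule {he : e * e = e} {M : Type} [AddCommGroup M] [Module A M] :
    Module (Corner e he) (CM e M) where
  smul c m := ⟨c.1 • m.1, show e • c.1 • m.1 = c.1 • m.1 by
    rw [smul_smul, labs he c.2]⟩
  one_smul m := Subtype.ext (cm_prop m)
  mul_smul c d m := Subtype.ext (mul_smul c.1 d.1 m.1)
  smul_zero c := Subtype.ext (smul_zero c.1)
  smul_add c m m' := Subtype.ext (smul_add c.1 m.1 m'.1)
  add_smul c d m := Subtype.ext (add_smul c.1 d.1 m.1)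
  zero_smul m := Subtype.ext (zero_smul A m.1)

lemma cm_smul_val {he : e * e = e} {M : Type} [AddCommGroup M] [Module A M]
    (c : Corner e he) (m : CM e M) : (c • m).1 = c.1 • m.1 := rfl

lemma ea_prop (x : CM e A) : e * x.1 = x.1 := x.2

/-- Right multiplication by `a` on `CM e A`, as a `Corner`-linear map. -/
def rmul (he : e * e = e) (a : A) : CM e A →ₗ[Corner e he] CM e A where
  toFun x := ⟨x.1 * a, show e • (x.1 * a) = x.1 * a by
    show e * (x.1 * a) = x.1 * a
    rw [← mul_assoc, ea_prop x]⟩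
  map_add' x y := Subtype.ext (add_mul x.1 y.1 a)
  map_smul' c x := Subtype.ext (mul_assoc c.1 x.1 a)

instance gnModule {he : e * e = e} {N : Type} [AddCommGroup N] [Module (Corner e he) N] :
    Module A (CM e A →ₗ[Corner e he] N) where
  smul a f := f.comp (rmul he a)
  one_smul f := LinearMap.ext fun x => congrArg f (Subtype.ext (mul_one x.1))
  mul_smul a b f := LinearMap.ext fun x => congrArg f (Subtype.ext (mul_assoc x.1 a b).symm)
  smul_zero _ := LinearMap.zero_comp _
  smul_add _ f g := LinearMap.add_comp _ _ _
  add_smul a b f := LinearMap.ext fun x => by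
    show f (rmul he (a + b) x) = f (rmul he a x) + f (rmul he b x)
    rw [show rmul he (a + b) x = rmul he a x + rmul he b x from Subtype.ext (mul_add x.1 a b),
      map_add]
  zero_smul f := LinearMap.ext fun x => by
    show f (rmul he 0 x) = 0
    rw [show rmul he 0 x = 0 from Subtype.ext (mul_zero x.1), map_zero]

lemma gn_smul_apply {he : e * e = e} {N : Type} [AddCommGroup N] [Module (Corner e he) N]
    (a : A) (f : CM e A →ₗ[Corner e he] N) (x : CM e A) :
    (a • f) x = f (rmul he a x) := rfl

variable (he : e * e = e)

/-- The functor `M ↦ eM`. -/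
def Ffunc : ModuleCat.{0} A ⥤ ModuleCat.{0} (Corner e he) where
  obj M := ModuleCat.of _ (CM e (M : Type))
  map {M M'} f :=
    ModuleCat.ofHom
    { toFun := fun m => ⟨f.hom m.1, show e • f.hom m.1 = f.hom m.1 by rw [← map_smul, cm_prop m]⟩
      map_add' := fun m m' => Subtype.ext (map_add f.hom m.1 m'.1)
      map_smul' := fun c m => Subtype.ext (map_smul f.hom c.1 m.1) }
  map_id _ := rfl
  map_comp _ _ := rfl

/-- The functor `N ↦ Hom_{eAe}(eA, N)`. -/
def Gfunc : ModuleCat.{0} (Corner e he) ⥤ ModuleCat.{0} A where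
  obj N := ModuleCat.of A (CM e A →ₗ[Corner e he] (N : Type))
  map {N N'} g :=
    ModuleCat.ofHom
    { toFun := fun f => g.hom.comp f
      map_add' := fun f f' => LinearMap.ext fun x => map_add g.hom _ _
      map_smul' := fun a f => rfl }
  map_id _ := rfl
  map_comp _ _ := rfl

variable {n : ℕ} {a b : Fin n → A}
  (ha : ∀ i, a i * e = a i) (hb : ∀ i, e * b i = b i) (hab : ∑ i, a i * b i = 1)

/-- `e` as an element of `eA`. -/
def eE : CM e A := ⟨e, show e • e = e from he⟩

/-- `x * e` as an element of the corner ring, for `x ∈ eA`. -/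
def corn (x : CM e A) : Corner e he :=
  ⟨x.1 * e, by rw [← mul_assoc, ea_prop x, mul_assoc, he]⟩

/-- Constructor for corner elements (avoiding anonymous-constructor unfolding). -/
def mkCorner (v : A) (h : e * v * e = v) : Corner e he := ⟨v, h⟩

lemma corn_add (x y : CM e A) : corn he (x + y) = corn he x + corn he y :=
  Subtype.ext (add_mul x.1 y.1 e)

lemma corn_smul (c : Corner e he) (x : CM e A) : corn he (c • x) = c * corn he x :=
  Subtype.ext (mul_assoc c.1 x.1 e)

lemma corn_rmul_e (x : CM e A) : corn he (rmul he e x) = corn he x :=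
  Subtype.ext (by show (x.1 * e) * e = x.1 * e; rw [mul_assoc, he])

lemma corn_smul_eE (x : CM e A) : corn he x • eE he = rmul he e x :=
  Subtype.ext (by show (x.1 * e) * e = x.1 * e; rw [mul_assoc, he])

lemma corn_eE : corn he (eE he) = 1 := Subtype.ext (show e * e = e from he)

/-- The unit of the Morita equivalence, as a linear equivalence. -/
noncomputable def etaEquiv (M : Type) [AddCommGroup M] [Module A M] :
    M ≃ₗ[A] (CM e A →ₗ[Corner e he] CM e M) where
  toFun m :=
    { toFun := fun x => ⟨x.1 • m, show e • x.1 • m = x.1 • m by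
        rw [smul_smul, show e * x.1 = x.1 from ea_prop x]⟩
      map_add' := fun x y => Subtype.ext (add_smul x.1 y.1 m)
      map_smul' := fun c x => Subtype.ext (mul_smul c.1 x.1 m) }
  map_add' m m' := LinearMap.ext fun x => Subtype.ext (smul_add x.1 m m')
  map_smul' r m := LinearMap.ext fun x => Subtype.ext (mul_smul x.1 r m).symm
  invFun f := ∑ i, a i • (f ⟨b i, show e • b i = b i from hb i⟩).1
  left_inv m := by
    show (∑ i, a i • (b i • m)) = m
    rw [Finset.sum_congr rfl fun i _ => smul_smul (a i) (b i) m, ← Finset.sum_smul, hab,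
      one_smul]
  right_inv f := by
    apply LinearMap.ext
    intro x
    apply Subtype.ext
    show x.1 • (∑ i, a i • (f ⟨b i, show e • b i = b i from hb i⟩).1) = (f x).1
    have hmem : ∀ i : Fin n, e * (x.1 * a i) * e = x.1 * a i := fun i => by
      rw [← mul_assoc, ea_prop x, mul_assoc, ha i]
    have hterm : ∀ i : Fin n, x.1 • a i • (f ⟨b i, show e • b i = b i from hb i⟩).1
        = ((f (mkCorner he (x.1 * a i) (hmem i) •
            (⟨b i, show e • b i = b i from hb i⟩ : CM e A))) : CM e M).1 := by
      intro i
      rw [map_smul f]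
      show x.1 • a i • _ = (x.1 * a i) • _
      rw [smul_smul]
    rw [Finset.smul_sum, Finset.sum_congr rfl fun i _ => hterm i]
    have hcoe : (∑ i, ((f (mkCorner he (x.1 * a i) (hmem i) •
        (⟨b i, show e • b i = b i from hb i⟩ : CM e A))) : CM e M).1)
        = ((∑ i, f (mkCorner he (x.1 * a i) (hmem i) •
            (⟨b i, show e • b i = b i from hb i⟩ : CM e A)) : CM e M)).1 :=
      (map_sum ((cmSub e M).subtype) _ _).symm
    rw [hcoe, ← map_sum f]
    congr 1
    apply congrArg f
    apply Subtype.ext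
    have hcoe2 : ((∑ i, mkCorner he (x.1 * a i) (hmem i) •
        (⟨b i, show e • b i = b i from hb i⟩ : CM e A) : CM e A)).1
        = ∑ i, (x.1 * a i) * b i :=
      map_sum ((cmSub e A).subtype) _ _
    rw [hcoe2]
    calc (∑ i, (x.1 * a i) * b i) = x.1 * ∑ i, a i * b i := by
          rw [Finset.mul_sum]
          exact Finset.sum_congr rfl fun i _ => (mul_assoc x.1 (a i) (b i))
      _ = x.1 := by rw [hab, mul_one]

/-- The counit of the Morita equivalence, as a linear equivalence. -/
noncomputable def epsEquiv (N : Type) [AddCommGroup N] [Module (Corner e he) N] :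
    CM e (CM e A →ₗ[Corner e he] N) ≃ₗ[Corner e he] N where
  toFun F := F.1 (eE he)
  map_add' F G := rfl
  map_smul' c F := by
    show (c.1 • F.1) (eE he) = c • F.1 (eE he)
    rw [gn_smul_apply, ← map_smul F.1]
    exact congrArg F.1 (Subtype.ext ((labs he c.2).trans (rabs he c.2).symm))
  invFun n :=
    ⟨{ toFun := fun x => corn he x • n
       map_add' := fun x y => by
         show corn he (x + y) • n = corn he x • n + corn he y • n
         rw [corn_add, add_smul]
       map_smul' := fun c x => by
         show corn he (c • x) • n = c • (corn he x • n)
         rw [corn_smul, mul_smul] }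
     , by
       show e • _ = _
       apply LinearMap.ext
       intro x
       show corn he (rmul he e x) • n = corn he x • n
       rw [corn_rmul_e]⟩
  left_inv F := by
    apply Subtype.ext
    apply LinearMap.ext
    intro x
    show corn he x • F.1 (eE he) = F.1 x
    rw [← map_smul F.1, corn_smul_eE]
    exact DFunLike.congr_fun (cm_prop F) x
  right_inv n := by
    show corn he (eE he) • n = n
    rw [corn_eE, one_smul]

/-- Morita equivalence coming from a full idempotent. -/
noncomputable def moritaEquiv {n : ℕ} {a b : Fin n → A}
    (ha : ∀ i, a i * e = a i) (hb : ∀ i, e * b i = b i) (hab : ∑ i, a i * b i = 1) :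
    ModuleCat.{0} A ≌ ModuleCat.{0} (Corner e he) := by
  refine CategoryTheory.Equivalence.mk (Ffunc he) (Gfunc he)
    (NatIso.ofComponents (fun M => (etaEquiv he ha hb hab (M : Type)).toModuleIso) ?_)
    (NatIso.ofComponents (fun N => (epsEquiv he (N : Type)).toModuleIso) ?_)
  · intro M M' f
    apply ModuleCat.hom_ext
    apply LinearMap.ext
    intro m
    apply LinearMap.ext
    intro x
    exact Subtype.ext (map_smul f.hom x.1 m).symm
  · intro N N' g
    rfl

end Morita

/-! ### Computations in the algebra `A_λ` -/

noncomputable abbrev qE1 : QAlg k K lam := RingQuot.mkAlgHom k (ARel k K lam) (gE1 k K)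
noncomputable abbrev qX (i : Fin 2) : QAlg k K lam :=
  RingQuot.mkAlgHom k (ARel k K lam) (gX k K i)
noncomputable abbrev qY (j : Fin K) : QAlg k K lam :=
  RingQuot.mkAlgHom k (ARel k K lam) (gY k K j)

lemma qsum : aE0 k K lam + qE1 k K lam = 1 := by
  have h := RingQuot.mkAlgHom_rel k (ARel.sum (k := k) (K := K) (lam := lam))
  rwa [map_add, map_one] at h

lemma qidem : aE0 k K lam * aE0 k K lam = aE0 k K lam := by
  have h := RingQuot.mkAlgHom_rel k (ARel.idem0 (k := k) (K := K) (lam := lam))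
  rwa [map_mul] at h

lemma qxe (i : Fin 2) : aE0 k K lam * qX k K lam i = qX k K lam i := by
  simp only [aE0, qE1, qX]
  have h := RingQuot.mkAlgHom_rel k (ARel.xpath (k := k) (K := K) (lam := lam) i)
  rw [map_mul, map_mul] at h
  conv_lhs => rw [← h]
  rw [← mul_assoc, ← mul_assoc, qidem, h]

lemma qye (jj : Fin K) : qY k K lam jj * aE0 k K lam = qY k K lam jj := by
  simp only [aE0, qE1, qY]
  have h := RingQuot.mkAlgHom_rel k (ARel.ypath (k := k) (K := K) (lam := lam) jj)
  rw [map_mul, map_mul] at h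
  conv_lhs => rw [← h]
  rw [mul_assoc, qidem, h]

lemma qE1eq (i : ℕ) (h2 : i + 1 < K) :
    algebraMap k (QAlg k K lam) (lam (i + 1)) * qE1 k K lam =
      qY k K lam ⟨i, by omega⟩ * qX k K lam 1 - qY k K lam ⟨i + 1, h2⟩ * qX k K lam 0 := by
  simp only [qE1, qX, qY]
  have h := RingQuot.mkAlgHom_rel k (ARel.defrel2 (k := k) (K := K) (lam := lam) i h2)
  rw [map_mul, map_sub, map_smul, map_mul, Algebra.smul_def] at h
  rw [h]
  abel

open CategoryTheory in
/-- If λ = (λ_1, ..., λ_{K-1}) ≠ 0, the multiplication map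
A_λ e0 ⊗_{e0 A_λ e0} e0 A_λ → A_λ is surjective (its image is the span of all
a·e0·b), and consequently A_λ is Morita equivalent to the corner ring e0 A_λ e0. -/
theorem qalg_morita_corner (hK : 2 ≤ K)
    (hlam : ∃ j, 1 ≤ j ∧ j ≤ K - 1 ∧ lam j ≠ 0) :
    Submodule.span k {z : QAlg k K lam | ∃ a b, z = a * aE0 k K lam * b} = ⊤ ∧
    ∀ he : aE0 k K lam * aE0 k K lam = aE0 k K lam,
      Nonempty (ModuleCat.{0} (QAlg k K lam) ≌ ModuleCat.{0} (Corner (aE0 k K lam) he)) := by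
  classical
  obtain ⟨j, hj1, hj2, hne⟩ := hlam
  have hiK : (j - 1) + 1 < K := by omega
  have hi0 : (j - 1) < K := by omega
  have hne' : lam ((j - 1) + 1) ≠ 0 := by rwa [show (j - 1) + 1 = j by omega]
  set u : QAlg k K lam := algebraMap k (QAlg k K lam) (lam ((j - 1) + 1))⁻¹ with hu
  have hE1' : qE1 k K lam =
      u * (qY k K lam ⟨j - 1, hi0⟩ * qX k K lam 1
        - qY k K lam ⟨(j - 1) + 1, hiK⟩ * qX k K lam 0) := by
    rw [← qE1eq k K lam (j - 1) hiK, hu, ← mul_assoc, ← map_mul,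
      inv_mul_cancel₀ hne', map_one, one_mul]
  constructor
  · rw [Submodule.eq_top_iff']
    intro z
    have h1 : (u * (z * qY k K lam ⟨j - 1, hi0⟩)) * aE0 k K lam * qX k K lam 1
        = u * (z * (qY k K lam ⟨j - 1, hi0⟩ * (qX k K lam 1))) := by
      simp only [mul_assoc]
      rw [qxe]
    have h2 : (u * (z * qY k K lam ⟨(j - 1) + 1, hiK⟩)) * aE0 k K lam * qX k K lam 0
        = u * (z * (qY k K lam ⟨(j - 1) + 1, hiK⟩ * (qX k K lam 0))) := by
      simp only [mul_assoc]
      rw [qxe]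
    have hz : z = z * aE0 k K lam * 1
        + (u * (z * qY k K lam ⟨j - 1, hi0⟩)) * aE0 k K lam * qX k K lam 1
        - (u * (z * qY k K lam ⟨(j - 1) + 1, hiK⟩)) * aE0 k K lam * qX k K lam 0 := by
      rw [h1, h2, mul_one, add_sub_assoc, ← mul_sub, ← mul_sub, ← mul_assoc, hu,
        Algebra.commutes, mul_assoc, ← hu, ← hE1', ← mul_add, qsum, mul_one]
    rw [hz]
    refine sub_mem (add_mem ?_ ?_) ?_
    · exact Submodule.subset_span ⟨z, 1, rfl⟩
    · exact Submodule.subset_span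
        ⟨u * (z * qY k K lam ⟨j - 1, hi0⟩), qX k K lam 1, rfl⟩
    · exact Submodule.subset_span
        ⟨u * (z * qY k K lam ⟨(j - 1) + 1, hiK⟩), qX k K lam 0, rfl⟩
  · intro he
    refine ⟨moritaEquiv he (n := 3)
      (a := ![aE0 k K lam, u * qY k K lam ⟨j - 1, hi0⟩,
        -(u * qY k K lam ⟨(j - 1) + 1, hiK⟩)])
      (b := ![aE0 k K lam, qX k K lam 1, qX k K lam 0]) ?_ ?_ ?_⟩
    · intro i
      fin_cases i
      · exact qidem k K lam
      · show (u * qY k K lam ⟨j - 1, hi0⟩) * aE0 k K lam = u * qY k K lam ⟨j - 1, hi0⟩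
        rw [mul_assoc, qye]
      · show (-(u * qY k K lam ⟨(j - 1) + 1, hiK⟩)) * aE0 k K lam
            = -(u * qY k K lam ⟨(j - 1) + 1, hiK⟩)
        rw [neg_mul (u * qY k K lam ⟨(j - 1) + 1, hiK⟩) (aE0 k K lam), mul_assoc, qye]
    · intro i
      fin_cases i
      · exact qidem k K lam
      · exact qxe k K lam 1
      · exact qxe k K lam 0
    · rw [Fin.sum_univ_three]
      show aE0 k K lam * aE0 k K lam
          + (u * qY k K lam ⟨j - 1, hi0⟩) * qX k K lam 1
          + (-(u * qY k K lam ⟨(j - 1) + 1, hiK⟩)) * qX k K lam 0 = 1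
      rw [qidem, neg_mul (u * qY k K lam ⟨(j - 1) + 1, hiK⟩) (qX k K lam 0), mul_assoc,
        mul_assoc, ← sub_eq_add_neg (aE0 k K lam + u * (qY k K lam ⟨j - 1, hi0⟩ * qX k K lam 1))
          (u * (qY k K lam ⟨(j - 1) + 1, hiK⟩ * qX k K lam 0)), add_sub_assoc,
        ← mul_sub, ← hE1']
      exact qsum k K lam
end
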